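/- arXiv:1612.01913 — 3 statements merged into one kernel-verified Lean document; each statement's English description precedes it below -/
import Mathlib

section
/- If O, P, Q, R are four coplanar points, no three collinear, and Z is a point not in their plane, then the joins o = ZO, p = ZP, q = ZQ, r = ZR form a ⋎-tetrad, and its diagonals are a = ZA, b = ZB, c = ZC where A = OP·QR, B = OQ·RP, C = OR·PQ. -/
/-- A 'linear' framework for projective 3-space: a set of lines with an
incidence relation, together with the data of the two incidence-equivalence
classes `SigY`, `SigM` on `Σ(a,b)` and the derived points `pt` and planes `pl`. -/
structure LineGeom where
  L : Type
  dag : L → L → Prop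
  dag_refl : ∀ l, dag l l
  dag_symm : ∀ {a b}, dag a b → dag b a
  SigY : L → L → Set L
  SigM : L → L → Set L
  pt : L → L → Set L
  pl : L → L → Set L

namespace LineGeom

variable (G : LineGeom)

/-- `S†` : the lines incident to every line of `S`. -/
def perp (S : Set G.L) : Set G.L := {x | ∀ s ∈ S, G.dag x s}

/-- `Σ(a,b) = [a b] \ [a b]†`. -/
def Sig (a b : G.L) : Set G.L := G.perp {a, b} \ G.perp (G.perp {a, b})

/-- AXIOMS [1]-[4] together with the defining properties of the two classes
`Σ_⋎(a,b)`, `Σ_⊓(a,b)` and of the point `a ⋎ b` and plane `a ⊓ b`. -/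
structure Axioms : Prop where
  ax1 : ∀ l : G.L, ∃ x y z, x ∈ G.perp {l} ∧ y ∈ G.perp {l} ∧ z ∈ G.perp {l} ∧
      ¬ G.dag x y ∧ ¬ G.dag y z ∧ ¬ G.dag x z
  ax21 : ∀ a b : G.L, a ≠ b → G.dag a b →
      ∃ x ∈ G.perp {a, b}, ∃ y ∈ G.perp {a, b}, ¬ G.dag x y
  ax22 : ∀ a b : G.L, a ≠ b → G.dag a b → ∀ c ∈ G.Sig a b,
      ∀ x ∈ G.perp {a, b, c}, ∀ y ∈ G.perp {a, b, c}, G.dag x y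
  ax23 : ∀ a b : G.L, a ≠ b → G.dag a b →
      ∀ x ∈ G.perp {a, b}, ∀ y ∈ G.perp {a, b}, ¬ G.dag x y →
      G.perp {a, b} = G.perp {a, b, x} ∪ G.perp {a, b, y}
  ax3 : ∀ a b : G.L, a ≠ b → G.dag a b → ∀ c ∈ G.Sig a b,
      ∃ p q : G.L, p ≠ q ∧ G.dag p q ∧ ∃ r ∈ G.Sig p q,
        G.perp {a, b, c} ∩ G.perp {p, q, r} = ∅
  sig_union : ∀ a b : G.L, a ≠ b → G.dag a b →
      G.SigY a b ∪ G.SigM a b = G.Sig a b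
  sig_disjoint : ∀ a b : G.L, a ≠ b → G.dag a b →
      G.SigY a b ∩ G.SigM a b = ∅
  sigY_nonempty : ∀ a b : G.L, a ≠ b → G.dag a b → (G.SigY a b).Nonempty
  sigM_nonempty : ∀ a b : G.L, a ≠ b → G.dag a b → (G.SigM a b).Nonempty
  sig_class : ∀ a b : G.L, a ≠ b → G.dag a b → ∀ x ∈ G.Sig a b, ∀ y ∈ G.Sig a b,
      (((x ∈ G.SigY a b ∧ y ∈ G.SigY a b) ∨ (x ∈ G.SigM a b ∧ y ∈ G.SigM a b))
        ↔ G.dag x y)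
  sigY_symm : ∀ a b : G.L, G.SigY a b = G.SigY b a
  sigM_symm : ∀ a b : G.L, G.SigM a b = G.SigM b a
  pt_spec : ∀ a b : G.L, a ≠ b → G.dag a b → ∀ c ∈ G.SigY a b,
      G.pt a b = G.perp {a, b, c}
  pl_spec : ∀ a b : G.L, a ≠ b → G.dag a b → ∀ c ∈ G.SigM a b,
      G.pl a b = G.perp {a, b, c}
  ax4 : ∀ a b p q : G.L, a ≠ b → G.dag a b → p ≠ q → G.dag p q →
      (G.pt a b ∩ G.pt p q).Nonempty ∧ (G.pl a b ∩ G.pl p q).Nonempty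

/-- Three pairwise-incident distinct lines forming a triad. -/
def Triad (a b c : G.L) : Prop :=
  a ≠ b ∧ b ≠ c ∧ a ≠ c ∧ G.dag a b ∧ G.dag b c ∧ G.dag a c ∧
  a ∈ G.Sig b c ∧ b ∈ G.Sig c a ∧ c ∈ G.Sig a b

/-- A `⊓`-triad. -/
def MTriad (a b c : G.L) : Prop :=
  a ≠ b ∧ b ≠ c ∧ a ≠ c ∧ G.dag a b ∧ G.dag b c ∧ G.dag a c ∧
  a ∈ G.SigM b c ∧ b ∈ G.SigM c a ∧ c ∈ G.SigM a b

/-- A `⋎`-triad. -/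
def YTriad (a b c : G.L) : Prop :=
  a ≠ b ∧ b ≠ c ∧ a ≠ c ∧ G.dag a b ∧ G.dag b c ∧ G.dag a c ∧
  a ∈ G.SigY b c ∧ b ∈ G.SigY c a ∧ c ∈ G.SigY a b

/-- A `⊓`-tetrad: each of the four included triples is a `⊓`-triad. -/
def MTetrad (o p q r : G.L) : Prop :=
  G.MTriad p q r ∧ G.MTriad o q r ∧ G.MTriad o r p ∧ G.MTriad o p q

/-- A `⋎`-tetrad. -/
def YTetrad (o p q r : G.L) : Prop :=
  G.YTriad p q r ∧ G.YTriad o q r ∧ G.YTriad o r p ∧ G.YTriad o p q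

/-- A point: a set of lines of the form `x ⋎ y`. -/
def IsPoint (X : Set G.L) : Prop := ∃ x y : G.L, x ≠ y ∧ G.dag x y ∧ X = G.pt x y

/-- A plane: a set of lines of the form `x ⊓ y`. -/
def IsPlane (X : Set G.L) : Prop := ∃ x y : G.L, x ≠ y ∧ G.dag x y ∧ X = G.pl x y

end LineGeom

open LineGeom

section Aux
variable {G : LineGeom}

lemma mem_perp_pair {a b x : G.L} :
    x ∈ G.perp {a, b} ↔ G.dag x a ∧ G.dag x b := by
  simp [perp]

lemma mem_perp_triple {a b c x : G.L} :
    x ∈ G.perp {a, b, c} ↔ G.dag x a ∧ G.dag x b ∧ G.dag x c := by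
  simp [perp]

lemma sigY_sub_sig (hG : G.Axioms) {a b : G.L} (hab : a ≠ b) (hd : G.dag a b) :
    G.SigY a b ⊆ G.Sig a b := by
  rw [← hG.sig_union a b hab hd]; exact Set.subset_union_left

lemma sigM_sub_sig (hG : G.Axioms) {a b : G.L} (hab : a ≠ b) (hd : G.dag a b) :
    G.SigM a b ⊆ G.Sig a b := by
  rw [← hG.sig_union a b hab hd]; exact Set.subset_union_right

lemma sig_sub_perp {a b : G.L} : G.Sig a b ⊆ G.perp {a, b} :=
  fun _ h => h.1

lemma not_dag_YM (hG : G.Axioms) {a b x y : G.L} (hab : a ≠ b) (hd : G.dag a b)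
    (hx : x ∈ G.SigY a b) (hy : y ∈ G.SigM a b) : ¬ G.dag x y := by
  intro hdxy
  have hx' := sigY_sub_sig hG hab hd hx
  have hy' := sigM_sub_sig hG hab hd hy
  have := (hG.sig_class a b hab hd x hx' y hy').2 hdxy
  rcases this with ⟨_, h⟩ | ⟨h, _⟩
  · have : y ∈ G.SigY a b ∩ G.SigM a b := ⟨h, hy⟩
    rw [hG.sig_disjoint a b hab hd] at this; exact this
  · have : x ∈ G.SigY a b ∩ G.SigM a b := ⟨hx, h⟩
    rw [hG.sig_disjoint a b hab hd] at this; exact this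

lemma dag_YY (hG : G.Axioms) {a b x y : G.L} (hab : a ≠ b) (hd : G.dag a b)
    (hx : x ∈ G.SigY a b) (hy : y ∈ G.SigY a b) : G.dag x y :=
  (hG.sig_class a b hab hd x (sigY_sub_sig hG hab hd hx) y
    (sigY_sub_sig hG hab hd hy)).1 (Or.inl ⟨hx, hy⟩)

lemma dag_MM (hG : G.Axioms) {a b x y : G.L} (hab : a ≠ b) (hd : G.dag a b)
    (hx : x ∈ G.SigM a b) (hy : y ∈ G.SigM a b) : G.dag x y :=
  (hG.sig_class a b hab hd x (sigM_sub_sig hG hab hd hx) y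
    (sigM_sub_sig hG hab hd hy)).1 (Or.inr ⟨hx, hy⟩)

lemma sigY_sub_pt (hG : G.Axioms) {a b : G.L} (hab : a ≠ b) (hd : G.dag a b) :
    G.SigY a b ⊆ G.pt a b := by
  intro w hw
  rw [hG.pt_spec a b hab hd w hw, mem_perp_triple]
  have h := sig_sub_perp (sigY_sub_sig hG hab hd hw)
  rw [mem_perp_pair] at h
  exact ⟨h.1, h.2, G.dag_refl w⟩

lemma sigM_sub_pl (hG : G.Axioms) {a b : G.L} (hab : a ≠ b) (hd : G.dag a b) :
    G.SigM a b ⊆ G.pl a b := by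
  intro w hw
  rw [hG.pl_spec a b hab hd w hw, mem_perp_triple]
  have h := sig_sub_perp (sigM_sub_sig hG hab hd hw)
  rw [mem_perp_pair] at h
  exact ⟨h.1, h.2, G.dag_refl w⟩

lemma mem_pt_left (hG : G.Axioms) {a b : G.L} (hab : a ≠ b) (hd : G.dag a b) :
    a ∈ G.pt a b := by
  obtain ⟨c, hc⟩ := hG.sigY_nonempty a b hab hd
  rw [hG.pt_spec a b hab hd c hc, mem_perp_triple]
  have h := sig_sub_perp (sigY_sub_sig hG hab hd hc)
  rw [mem_perp_pair] at h
  exact ⟨G.dag_refl a, hd, G.dag_symm h.1⟩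

lemma mem_pt_right (hG : G.Axioms) {a b : G.L} (hab : a ≠ b) (hd : G.dag a b) :
    b ∈ G.pt a b := by
  obtain ⟨c, hc⟩ := hG.sigY_nonempty a b hab hd
  rw [hG.pt_spec a b hab hd c hc, mem_perp_triple]
  have h := sig_sub_perp (sigY_sub_sig hG hab hd hc)
  rw [mem_perp_pair] at h
  exact ⟨G.dag_symm hd, G.dag_refl b, G.dag_symm h.2⟩

lemma mem_pl_left (hG : G.Axioms) {a b : G.L} (hab : a ≠ b) (hd : G.dag a b) :
    a ∈ G.pl a b := by
  obtain ⟨c, hc⟩ := hG.sigM_nonempty a b hab hd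
  rw [hG.pl_spec a b hab hd c hc, mem_perp_triple]
  have h := sig_sub_perp (sigM_sub_sig hG hab hd hc)
  rw [mem_perp_pair] at h
  exact ⟨G.dag_refl a, hd, G.dag_symm h.1⟩

lemma mem_pl_right (hG : G.Axioms) {a b : G.L} (hab : a ≠ b) (hd : G.dag a b) :
    b ∈ G.pl a b := by
  obtain ⟨c, hc⟩ := hG.sigM_nonempty a b hab hd
  rw [hG.pl_spec a b hab hd c hc, mem_perp_triple]
  have h := sig_sub_perp (sigM_sub_sig hG hab hd hc)
  rw [mem_perp_pair] at h
  exact ⟨G.dag_symm hd, G.dag_refl b, G.dag_symm h.2⟩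

lemma pt_clique (hG : G.Axioms) {a b : G.L} (hab : a ≠ b) (hd : G.dag a b)
    {u v : G.L} (hu : u ∈ G.pt a b) (hv : v ∈ G.pt a b) : G.dag u v := by
  obtain ⟨c, hc⟩ := hG.sigY_nonempty a b hab hd
  rw [hG.pt_spec a b hab hd c hc] at hu hv
  exact hG.ax22 a b hab hd c (sigY_sub_sig hG hab hd hc) u hu v hv

lemma pl_clique (hG : G.Axioms) {a b : G.L} (hab : a ≠ b) (hd : G.dag a b)
    {u v : G.L} (hu : u ∈ G.pl a b) (hv : v ∈ G.pl a b) : G.dag u v := by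
  obtain ⟨c, hc⟩ := hG.sigM_nonempty a b hab hd
  rw [hG.pl_spec a b hab hd c hc] at hu hv
  exact hG.ax22 a b hab hd c (sigM_sub_sig hG hab hd hc) u hu v hv

lemma pt_sub_perp (hG : G.Axioms) {a b : G.L} (hab : a ≠ b) (hd : G.dag a b) :
    G.pt a b ⊆ G.perp {a, b} := by
  obtain ⟨c, hc⟩ := hG.sigY_nonempty a b hab hd
  rw [hG.pt_spec a b hab hd c hc]
  intro w hw
  rw [mem_perp_triple] at hw
  rw [mem_perp_pair]
  exact ⟨hw.1, hw.2.1⟩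

lemma pl_sub_perp (hG : G.Axioms) {a b : G.L} (hab : a ≠ b) (hd : G.dag a b) :
    G.pl a b ⊆ G.perp {a, b} := by
  obtain ⟨c, hc⟩ := hG.sigM_nonempty a b hab hd
  rw [hG.pl_spec a b hab hd c hc]
  intro w hw
  rw [mem_perp_triple] at hw
  rw [mem_perp_pair]
  exact ⟨hw.1, hw.2.1⟩

lemma perp_pair_eq (hG : G.Axioms) {a b : G.L} (hab : a ≠ b) (hd : G.dag a b) :
    G.perp {a, b} = G.pt a b ∪ G.pl a b := by
  obtain ⟨cY, hcY⟩ := hG.sigY_nonempty a b hab hd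
  obtain ⟨cM, hcM⟩ := hG.sigM_nonempty a b hab hd
  have h1 : cY ∈ G.perp {a, b} := sig_sub_perp (sigY_sub_sig hG hab hd hcY)
  have h2 : cM ∈ G.perp {a, b} := sig_sub_perp (sigM_sub_sig hG hab hd hcM)
  have hnd : ¬ G.dag cY cM := not_dag_YM hG hab hd hcY hcM
  rw [hG.pt_spec a b hab hd cY hcY, hG.pl_spec a b hab hd cM hcM]
  exact hG.ax23 a b hab hd cY h1 cM h2 hnd

end Aux

section Aux2
variable {G : LineGeom}

lemma mem_sigY_of (hG : G.Axioms) {a b w : G.L} (hab : a ≠ b) (hd : G.dag a b)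
    (hpt : w ∈ G.pt a b) (hnpl : w ∉ G.pl a b) : w ∈ G.SigY a b := by
  have hwperp : w ∈ G.perp {a, b} := pt_sub_perp hG hab hd hpt
  obtain ⟨cM, hcM⟩ := hG.sigM_nonempty a b hab hd
  have hsig : w ∈ G.Sig a b := by
    refine ⟨hwperp, ?_⟩
    intro hpp
    apply hnpl
    rw [hG.pl_spec a b hab hd cM hcM, mem_perp_triple]
    rw [mem_perp_pair] at hwperp
    exact ⟨hwperp.1, hwperp.2,
      hpp cM (sig_sub_perp (sigM_sub_sig hG hab hd hcM))⟩
  have := hG.sig_union a b hab hd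
  rw [← this] at hsig
  rcases hsig with h | h
  · exact h
  · exact absurd (sigM_sub_pl hG hab hd h) hnpl

lemma mem_sigM_of (hG : G.Axioms) {a b w : G.L} (hab : a ≠ b) (hd : G.dag a b)
    (hpl : w ∈ G.pl a b) (hnpt : w ∉ G.pt a b) : w ∈ G.SigM a b := by
  have hwperp : w ∈ G.perp {a, b} := pl_sub_perp hG hab hd hpl
  obtain ⟨cY, hcY⟩ := hG.sigY_nonempty a b hab hd
  have hsig : w ∈ G.Sig a b := by
    refine ⟨hwperp, ?_⟩
    intro hpp
    apply hnpt
    rw [hG.pt_spec a b hab hd cY hcY, mem_perp_triple]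
    rw [mem_perp_pair] at hwperp
    exact ⟨hwperp.1, hwperp.2,
      hpp cY (sig_sub_perp (sigY_sub_sig hG hab hd hcY))⟩
  have := hG.sig_union a b hab hd
  rw [← this] at hsig
  rcases hsig with h | h
  · exact absurd (sigY_sub_pt hG hab hd h) hnpt
  · exact h

lemma sigY_not_pl (hG : G.Axioms) {a b w : G.L} (hab : a ≠ b) (hd : G.dag a b)
    (hw : w ∈ G.SigY a b) : w ∉ G.pl a b := by
  intro hpl
  obtain ⟨cM, hcM⟩ := hG.sigM_nonempty a b hab hd
  have hd1 : G.dag w cM := by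
    rw [hG.pl_spec a b hab hd cM hcM, mem_perp_triple] at hpl
    exact hpl.2.2
  exact not_dag_YM hG hab hd hw hcM hd1

lemma sigM_not_pt (hG : G.Axioms) {a b w : G.L} (hab : a ≠ b) (hd : G.dag a b)
    (hw : w ∈ G.SigM a b) : w ∉ G.pt a b := by
  intro hpt
  obtain ⟨cY, hcY⟩ := hG.sigY_nonempty a b hab hd
  have hd1 : G.dag w cY := by
    rw [hG.pt_spec a b hab hd cY hcY, mem_perp_triple] at hpt
    exact hpt.2.2
  exact not_dag_YM hG hab hd hcY hw (G.dag_symm hd1)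

lemma dichotomy (hG : G.Axioms) {a b : G.L} (hab : a ≠ b) (hd : G.dag a b)
    {S : Set G.L} (hsub : S ⊆ G.perp {a, b})
    (hcl : ∀ x ∈ S, ∀ y ∈ S, G.dag x y) :
    S ⊆ G.pt a b ∨ S ⊆ G.pl a b := by
  by_contra h
  push_neg at h
  obtain ⟨w1, hw1S, hw1⟩ := Set.not_subset.mp h.1
  obtain ⟨w2, hw2S, hw2⟩ := Set.not_subset.mp h.2
  have h1 : w1 ∈ G.pt a b ∪ G.pl a b := by
    rw [← perp_pair_eq hG hab hd]; exact hsub hw1S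
  have h2 : w2 ∈ G.pt a b ∪ G.pl a b := by
    rw [← perp_pair_eq hG hab hd]; exact hsub hw2S
  have hw1M : w1 ∈ G.SigM a b :=
    mem_sigM_of hG hab hd (h1.resolve_left hw1) hw1
  have hw2Y : w2 ∈ G.SigY a b :=
    mem_sigY_of hG hab hd (h2.resolve_right hw2) hw2
  exact not_dag_YM hG hab hd hw2Y hw1M (hcl w2 hw2S w1 hw1S)

lemma exists_disjoint_plane (hG : G.Axioms) {a b : G.L} (hab : a ≠ b)
    (hd : G.dag a b) :
    ∃ p q : G.L, p ≠ q ∧ G.dag p q ∧ G.pt a b ∩ G.pl p q = ∅ := by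
  obtain ⟨c, hc⟩ := hG.sigY_nonempty a b hab hd
  obtain ⟨p, q, hpq, hdpq, r, hr, hdisj⟩ :=
    hG.ax3 a b hab hd c (sigY_sub_sig hG hab hd hc)
  rw [← hG.sig_union p q hpq hdpq] at hr
  rcases hr with hrY | hrM
  · exfalso
    have h4 := (hG.ax4 a b p q hab hd hpq hdpq).1
    rw [hG.pt_spec a b hab hd c hc, hG.pt_spec p q hpq hdpq r hrY] at h4
    rw [hdisj] at h4
    exact h4.ne_empty rfl
  · refine ⟨p, q, hpq, hdpq, ?_⟩
    rw [hG.pt_spec a b hab hd c hc, hG.pl_spec p q hpq hdpq r hrM]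
    exact hdisj

lemma exists_disjoint_point (hG : G.Axioms) {a b : G.L} (hab : a ≠ b)
    (hd : G.dag a b) :
    ∃ p q : G.L, p ≠ q ∧ G.dag p q ∧ G.pl a b ∩ G.pt p q = ∅ := by
  obtain ⟨c, hc⟩ := hG.sigM_nonempty a b hab hd
  obtain ⟨p, q, hpq, hdpq, r, hr, hdisj⟩ :=
    hG.ax3 a b hab hd c (sigM_sub_sig hG hab hd hc)
  rw [← hG.sig_union p q hpq hdpq] at hr
  rcases hr with hrY | hrM
  · refine ⟨p, q, hpq, hdpq, ?_⟩
    rw [hG.pl_spec a b hab hd c hc, hG.pt_spec p q hpq hdpq r hrY]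
    exact hdisj
  · exfalso
    have h4 := (hG.ax4 a b p q hab hd hpq hdpq).2
    rw [hG.pl_spec a b hab hd c hc, hG.pl_spec p q hpq hdpq r hrM] at h4
    rw [hdisj] at h4
    exact h4.ne_empty rfl

end Aux2

section Aux3
variable {G : LineGeom}

lemma point_clique (hG : G.Axioms) {X : Set G.L} (hX : G.IsPoint X)
    {u v : G.L} (hu : u ∈ X) (hv : v ∈ X) : G.dag u v := by
  obtain ⟨x, y, hxy, hdxy, rfl⟩ := hX
  exact pt_clique hG hxy hdxy hu hv

lemma plane_clique (hG : G.Axioms) {X : Set G.L} (hX : G.IsPlane X)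
    {u v : G.L} (hu : u ∈ X) (hv : v ∈ X) : G.dag u v := by
  obtain ⟨x, y, hxy, hdxy, rfl⟩ := hX
  exact pl_clique hG hxy hdxy hu hv

lemma star (hG : G.Axioms) {X : Set G.L} (hX : G.IsPoint X)
    {s t : G.L} (hs : s ∈ X) (ht : t ∈ X) (hst : s ≠ t) : X = G.pt s t := by
  obtain ⟨x, y, hxy, hdxy, rfl⟩ := hX
  obtain ⟨c, hc⟩ := hG.sigY_nonempty x y hxy hdxy
  have hcpt : c ∈ G.pt x y := sigY_sub_pt hG hxy hdxy hc
  have hxpt : x ∈ G.pt x y := mem_pt_left hG hxy hdxy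
  have hypt : y ∈ G.pt x y := mem_pt_right hG hxy hdxy
  have hdst : G.dag s t := pt_clique hG hxy hdxy hs ht
  have hsub1 : G.pt x y ⊆ G.perp {s, t} := fun w hw =>
    mem_perp_pair.mpr ⟨pt_clique hG hxy hdxy hw hs, pt_clique hG hxy hdxy hw ht⟩
  rcases dichotomy hG hst hdst hsub1
      (fun u hu v hv => pt_clique hG hxy hdxy hu hv) with hcase | hcase
  · have hsub2 : G.pt s t ⊆ G.perp {x, y} := fun w hw =>
      mem_perp_pair.mpr ⟨pt_clique hG hst hdst hw (hcase hxpt),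
        pt_clique hG hst hdst hw (hcase hypt)⟩
    rcases dichotomy hG hxy hdxy hsub2
        (fun u hu v hv => pt_clique hG hst hdst hu hv) with h2 | h2
    · exact Set.Subset.antisymm hcase h2
    · exact absurd (h2 (hcase hcpt)) (sigY_not_pl hG hxy hdxy hc)
  · exfalso
    have hsub2 : G.pl s t ⊆ G.perp {x, y} := fun w hw =>
      mem_perp_pair.mpr ⟨pl_clique hG hst hdst hw (hcase hxpt),
        pl_clique hG hst hdst hw (hcase hypt)⟩
    rcases dichotomy hG hxy hdxy hsub2
        (fun u hu v hv => pl_clique hG hst hdst hu hv) with h2 | h2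
    · have heq : G.pl s t = G.pt x y := Set.Subset.antisymm h2 hcase
      obtain ⟨p, q, hpq, hdpq, hdisj⟩ := exists_disjoint_plane hG hxy hdxy
      have h4 := (hG.ax4 s t p q hst hdst hpq hdpq).2
      rw [heq, hdisj] at h4
      exact h4.ne_empty rfl
    · exact absurd (h2 (hcase hcpt)) (sigY_not_pl hG hxy hdxy hc)

lemma plane_star (hG : G.Axioms) {X : Set G.L} (hX : G.IsPlane X)
    {s t : G.L} (hs : s ∈ X) (ht : t ∈ X) (hst : s ≠ t) : X = G.pl s t := by
  obtain ⟨x, y, hxy, hdxy, rfl⟩ := hX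
  obtain ⟨c, hc⟩ := hG.sigM_nonempty x y hxy hdxy
  have hcpl : c ∈ G.pl x y := sigM_sub_pl hG hxy hdxy hc
  have hxpl : x ∈ G.pl x y := mem_pl_left hG hxy hdxy
  have hypl : y ∈ G.pl x y := mem_pl_right hG hxy hdxy
  have hdst : G.dag s t := pl_clique hG hxy hdxy hs ht
  have hsub1 : G.pl x y ⊆ G.perp {s, t} := fun w hw =>
    mem_perp_pair.mpr ⟨pl_clique hG hxy hdxy hw hs, pl_clique hG hxy hdxy hw ht⟩
  rcases dichotomy hG hst hdst hsub1
      (fun u hu v hv => pl_clique hG hxy hdxy hu hv) with hcase | hcase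
  · exfalso
    have hsub2 : G.pt s t ⊆ G.perp {x, y} := fun w hw =>
      mem_perp_pair.mpr ⟨pt_clique hG hst hdst hw (hcase hxpl),
        pt_clique hG hst hdst hw (hcase hypl)⟩
    rcases dichotomy hG hxy hdxy hsub2
        (fun u hu v hv => pt_clique hG hst hdst hu hv) with h2 | h2
    · exact absurd (h2 (hcase hcpl)) (sigM_not_pt hG hxy hdxy hc)
    · have heq : G.pt s t = G.pl x y := Set.Subset.antisymm h2 hcase
      obtain ⟨p, q, hpq, hdpq, hdisj⟩ := exists_disjoint_point hG hxy hdxy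
      have h4 := (hG.ax4 s t p q hst hdst hpq hdpq).1
      rw [heq, hdisj] at h4
      exact h4.ne_empty rfl
  · have hsub2 : G.pl s t ⊆ G.perp {x, y} := fun w hw =>
      mem_perp_pair.mpr ⟨pl_clique hG hst hdst hw (hcase hxpl),
        pl_clique hG hst hdst hw (hcase hypl)⟩
    rcases dichotomy hG hxy hdxy hsub2
        (fun u hu v hv => pl_clique hG hst hdst hu hv) with h2 | h2
    · exact absurd (h2 (hcase hcpl)) (sigM_not_pt hG hxy hdxy hc)
    · exact Set.Subset.antisymm hcase h2

end Aux3

section Aux4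
variable {G : LineGeom}

lemma isPoint_pt {a b : G.L} (hab : a ≠ b) (hd : G.dag a b) :
    G.IsPoint (G.pt a b) := ⟨a, b, hab, hd, rfl⟩

lemma isPlane_pl {a b : G.L} (hab : a ≠ b) (hd : G.dag a b) :
    G.IsPlane (G.pl a b) := ⟨a, b, hab, hd, rfl⟩

lemma uniq_point (hG : G.Axioms) {X Y : Set G.L} (hX : G.IsPoint X)
    (hY : G.IsPoint Y) (hXY : X ≠ Y) {s t : G.L}
    (hsX : s ∈ X) (hsY : s ∈ Y) (htX : t ∈ X) (htY : t ∈ Y) : s = t := by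
  by_contra hst
  exact hXY ((star hG hX hsX htX hst).trans (star hG hY hsY htY hst).symm)

lemma uniq_plane (hG : G.Axioms) {X Y : Set G.L} (hX : G.IsPlane X)
    (hY : G.IsPlane Y) (hXY : X ≠ Y) {s t : G.L}
    (hsX : s ∈ X) (hsY : s ∈ Y) (htX : t ∈ X) (htY : t ∈ Y) : s = t := by
  by_contra hst
  exact hXY ((plane_star hG hX hsX htX hst).trans (plane_star hG hY hsY htY hst).symm)

lemma join_in_plane (hG : G.Axioms) {X Y ζ : Set G.L} (hX : G.IsPoint X)
    (hY : G.IsPoint Y) (hXY : X ≠ Y) (hζ : G.IsPlane ζ)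
    (hXζ : (X ∩ ζ).Nonempty) (hYζ : (Y ∩ ζ).Nonempty)
    {l : G.L} (hlX : l ∈ X) (hlY : l ∈ Y) : l ∈ ζ := by
  obtain ⟨u, huX, huζ⟩ := hXζ
  obtain ⟨v, hvY, hvζ⟩ := hYζ
  by_cases huv : u = v
  · subst huv
    have : l = u := uniq_point hG hX hY hXY hlX hlY huX hvY
    rw [this]; exact huζ
  · have hduv : G.dag u v := plane_clique hG hζ huζ hvζ
    have hζeq : ζ = G.pl u v := plane_star hG hζ huζ hvζ huv
    have hmem : l ∈ G.perp {u, v} := mem_perp_pair.mpr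
      ⟨point_clique hG hX hlX huX, point_clique hG hY hlY hvY⟩
    rw [perp_pair_eq hG huv hduv] at hmem
    rcases hmem with hpt | hpl
    · by_cases hlu : l = u
      · rw [hlu]; exact huζ
      · by_cases hXp : X = G.pt u v
        · have hvX : v ∈ X := by rw [hXp]; exact mem_pt_right hG huv hduv
          have : l = v := uniq_point hG hX hY hXY hlX hlY hvX hvY
          rw [this]; exact hvζ
        · exact absurd (uniq_point hG hX (isPoint_pt huv hduv) hXp hlX hpt
            huX (mem_pt_left hG huv hduv)) hlu
    · rw [hζeq]; exact hpl

lemma meet_in_point (hG : G.Axioms) {π ζ X : Set G.L} (hπ : G.IsPlane π)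
    (hζ : G.IsPlane ζ) (hne : π ≠ ζ) (hX : G.IsPoint X)
    {u v : G.L} (huX : u ∈ X) (huπ : u ∈ π) (hvX : v ∈ X) (hvζ : v ∈ ζ)
    {m : G.L} (hmπ : m ∈ π) (hmζ : m ∈ ζ) : m ∈ X := by
  by_cases huv : u = v
  · subst huv
    have : m = u := uniq_plane hG hπ hζ hne hmπ hmζ huπ hvζ
    rw [this]; exact huX
  · have hduv : G.dag u v := point_clique hG hX huX hvX
    have hXeq : X = G.pt u v := star hG hX huX hvX huv
    have hmem : m ∈ G.perp {u, v} := mem_perp_pair.mpr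
      ⟨plane_clique hG hπ hmπ huπ, plane_clique hG hζ hmζ hvζ⟩
    rw [perp_pair_eq hG huv hduv] at hmem
    rcases hmem with hpt | hpl
    · rw [hXeq]; exact hpt
    · by_cases hmu : m = u
      · rw [hmu]; exact huX
      · by_cases hπeq : π = G.pl u v
        · have hvπ : v ∈ π := by rw [hπeq]; exact mem_pl_right hG huv hduv
          have : m = v := uniq_plane hG hπ hζ hne hmπ hmζ hvπ hvζ
          rw [this]; exact hvX
        · exact absurd (uniq_plane hG hπ (isPlane_pl huv hduv) hπeq hmπ hpl
            huπ (mem_pl_left hG huv hduv)) hmu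

end Aux4

section Aux5
variable {G : LineGeom}

lemma join_ne (hG : G.Axioms) {Z U V ζ : Set G.L} (hZζ : Z ∩ ζ = ∅)
    (hU : G.IsPoint U) (hV : G.IsPoint V) (hUV : U ≠ V) (hζ : G.IsPlane ζ)
    (hUζ : (U ∩ ζ).Nonempty) (hVζ : (V ∩ ζ).Nonempty)
    {u v : G.L} (huZ : u ∈ Z) (huU : u ∈ U) (hvZ : v ∈ Z) (hvV : v ∈ V) :
    u ≠ v := by
  intro h
  subst h
  exact (Set.eq_empty_iff_forall_notMem.mp hZζ u)
    ⟨huZ, join_in_plane hG hU hV hUV hζ hUζ hVζ huU hvV⟩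

lemma key (hG : G.Axioms) {Z U V W ζ : Set G.L}
    (hZ : G.IsPoint Z) (hU : G.IsPoint U) (hV : G.IsPoint V) (hW : G.IsPoint W)
    (hζ : G.IsPlane ζ) (hUV : U ≠ V) (hUW : U ≠ W) (hVW : V ≠ W)
    (hUζ : (U ∩ ζ).Nonempty) (hVζ : (V ∩ ζ).Nonempty) (hWζ : (W ∩ ζ).Nonempty)
    (hZζ : Z ∩ ζ = ∅) (hnc3 : ¬ ∃ l : G.L, l ∈ U ∧ l ∈ V ∧ l ∈ W)
    {u v w : G.L} (huZ : u ∈ Z) (huU : u ∈ U) (hvZ : v ∈ Z) (hvV : v ∈ V)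
    (hwZ : w ∈ Z) (hwW : w ∈ W) : u ∈ G.SigY v w := by
  have hemp := Set.eq_empty_iff_forall_notMem.mp hZζ
  have hvw : v ≠ w := join_ne hG hZζ hV hW hVW hζ hVζ hWζ hvZ hvV hwZ hwW
  have hdvw : G.dag v w := point_clique hG hZ hvZ hwZ
  have hZeq : Z = G.pt v w := star hG hZ hvZ hwZ hvw
  have hnpl : u ∉ G.pl v w := by
    intro hu
    have hπ : G.IsPlane (G.pl v w) := isPlane_pl hvw hdvw
    have hπζ : G.pl v w ≠ ζ := by
      intro h
      exact hemp v ⟨hvZ, h ▸ mem_pl_left hG hvw hdvw⟩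
    obtain ⟨x, y, hxy, hdxy, hζeq⟩ := id hζ
    have h4 := (hG.ax4 v w x y hvw hdvw hxy hdxy).2
    rw [← hζeq] at h4
    obtain ⟨m, hmπ, hmζ⟩ := h4
    obtain ⟨su, hsuU, hsuζ⟩ := hUζ
    obtain ⟨sv, hsvV, hsvζ⟩ := hVζ
    obtain ⟨sw, hswW, hswζ⟩ := hWζ
    have hmU : m ∈ U := meet_in_point hG hπ hζ hπζ hU huU hu hsuU hsuζ hmπ hmζ
    have hmV : m ∈ V := meet_in_point hG hπ hζ hπζ hV hvV
      (mem_pl_left hG hvw hdvw) hsvV hsvζ hmπ hmζ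
    have hmW : m ∈ W := meet_in_point hG hπ hζ hπζ hW hwW
      (mem_pl_right hG hvw hdvw) hswW hswζ hmπ hmζ
    exact hnc3 ⟨m, hmU, hmV, hmW⟩
  have hupt : u ∈ G.pt v w := by rw [← hZeq]; exact huZ
  exact mem_sigY_of hG hvw hdvw hupt hnpl

lemma ytriad_of (hG : G.Axioms) {Z U V W ζ : Set G.L}
    (hZ : G.IsPoint Z) (hU : G.IsPoint U) (hV : G.IsPoint V) (hW : G.IsPoint W)
    (hζ : G.IsPlane ζ) (hUV : U ≠ V) (hUW : U ≠ W) (hVW : V ≠ W)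
    (hUζ : (U ∩ ζ).Nonempty) (hVζ : (V ∩ ζ).Nonempty) (hWζ : (W ∩ ζ).Nonempty)
    (hZζ : Z ∩ ζ = ∅) (hnc3 : ¬ ∃ l : G.L, l ∈ U ∧ l ∈ V ∧ l ∈ W)
    {u v w : G.L} (huZ : u ∈ Z) (huU : u ∈ U) (hvZ : v ∈ Z) (hvV : v ∈ V)
    (hwZ : w ∈ Z) (hwW : w ∈ W) : G.YTriad u v w := by
  have hnc3' : ¬ ∃ l : G.L, l ∈ V ∧ l ∈ W ∧ l ∈ U := by
    rintro ⟨l, h1, h2, h3⟩; exact hnc3 ⟨l, h3, h1, h2⟩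
  have hnc3'' : ¬ ∃ l : G.L, l ∈ W ∧ l ∈ U ∧ l ∈ V := by
    rintro ⟨l, h1, h2, h3⟩; exact hnc3 ⟨l, h2, h3, h1⟩
  refine ⟨join_ne hG hZζ hU hV hUV hζ hUζ hVζ huZ huU hvZ hvV,
    join_ne hG hZζ hV hW hVW hζ hVζ hWζ hvZ hvV hwZ hwW,
    join_ne hG hZζ hU hW hUW hζ hUζ hWζ huZ huU hwZ hwW,
    point_clique hG hZ huZ hvZ, point_clique hG hZ hvZ hwZ,
    point_clique hG hZ huZ hwZ,
    key hG hZ hU hV hW hζ hUV hUW hVW hUζ hVζ hWζ hZζ hnc3 huZ huU hvZ hvV hwZ hwW,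
    ?_, ?_⟩
  · exact key hG hZ hV hW hU hζ hVW (Ne.symm hUV) (Ne.symm hUW) hVζ hWζ hUζ hZζ
      hnc3' hvZ hvV hwZ hwW huZ huU
  · exact key hG hZ hW hU hV hζ (Ne.symm hUW) (Ne.symm hVW) hUV hWζ hUζ hVζ hZζ
      hnc3'' hwZ hwW huZ huU hvZ hvV

lemma line_in_pl (hG : G.Axioms) {Z U V ζ : Set G.L}
    (hZ : G.IsPoint Z) (hU : G.IsPoint U) (hV : G.IsPoint V) (hζ : G.IsPlane ζ)
    (hUV : U ≠ V) (hUζ : (U ∩ ζ).Nonempty) (hVζ : (V ∩ ζ).Nonempty)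
    (hZζ : Z ∩ ζ = ∅)
    {u v l : G.L} (huZ : u ∈ Z) (huU : u ∈ U) (hvZ : v ∈ Z) (hvV : v ∈ V)
    (hlU : l ∈ U) (hlV : l ∈ V) : l ∈ G.pl u v ∧ l ∉ Z ∧ l ∈ ζ := by
  have hlζ : l ∈ ζ := join_in_plane hG hU hV hUV hζ hUζ hVζ hlU hlV
  have hlZ : l ∉ Z := fun h => (Set.eq_empty_iff_forall_notMem.mp hZζ l) ⟨h, hlζ⟩
  have huv : u ≠ v := join_ne hG hZζ hU hV hUV hζ hUζ hVζ huZ huU hvZ hvV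
  have hduv : G.dag u v := point_clique hG hZ huZ hvZ
  have hmem : l ∈ G.perp {u, v} := mem_perp_pair.mpr
    ⟨point_clique hG hU hlU huU, point_clique hG hV hlV hvV⟩
  rw [perp_pair_eq hG huv hduv] at hmem
  rcases hmem with hpt | hpl
  · exfalso
    apply hlZ
    rw [star hG hZ huZ hvZ huv]
    exact hpt
  · exact ⟨hpl, hlZ, hlζ⟩

lemma diag_mem (hG : G.Axioms) {Z U V A ζ : Set G.L}
    (hZ : G.IsPoint Z) (hU : G.IsPoint U) (hV : G.IsPoint V) (hA : G.IsPoint A)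
    (hζ : G.IsPlane ζ) (hUV : U ≠ V) (hAU : A ≠ U)
    (hUζ : (U ∩ ζ).Nonempty) (hVζ : (V ∩ ζ).Nonempty) (hZζ : Z ∩ ζ = ∅)
    {u v lUV a : G.L} (huZ : u ∈ Z) (huU : u ∈ U) (hvZ : v ∈ Z) (hvV : v ∈ V)
    (hlU : lUV ∈ U) (hlV : lUV ∈ V) (hlA : lUV ∈ A)
    (haZ : a ∈ Z) (haA : a ∈ A) : a ∈ G.pl u v := by
  obtain ⟨hlpl, hlZ, hlζ⟩ := line_in_pl hG hZ hU hV hζ hUV hUζ hVζ hZζ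
    huZ huU hvZ hvV hlU hlV
  have huv : u ≠ v := join_ne hG hZζ hU hV hUV hζ hUζ hVζ huZ huU hvZ hvV
  have hduv : G.dag u v := point_clique hG hZ huZ hvZ
  have hul : u ≠ lUV := fun h => hlZ (h ▸ huZ)
  have hdul : G.dag u lUV := point_clique hG hU huU hlU
  have hpleq : G.pl u v = G.pl u lUV :=
    plane_star hG (isPlane_pl huv hduv) (mem_pl_left hG huv hduv) hlpl hul
  have hmem : a ∈ G.perp {u, lUV} := mem_perp_pair.mpr
    ⟨point_clique hG hZ haZ huZ, point_clique hG hA haA hlA⟩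
  rw [perp_pair_eq hG hul hdul] at hmem
  rcases hmem with hpt | hpl
  · exfalso
    by_cases hau : a = u
    · subst hau
      have hAζ : (A ∩ ζ).Nonempty := ⟨lUV, hlA, hlζ⟩
      have : a ∈ ζ := join_in_plane hG hA hU hAU hζ hAζ hUζ haA huU
      exact (Set.eq_empty_iff_forall_notMem.mp hZζ a) ⟨haZ, this⟩
    · by_cases hZp : Z = G.pt u lUV
      · apply hlZ
        rw [hZp]
        exact mem_pt_right hG hul hdul
      · exact hau (uniq_point hG hZ (isPoint_pt hul hdul) hZp haZ hpt huZ
          (mem_pt_left hG hul hdul))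
  · rw [hpleq]
    exact hpl

end Aux5


/-- Joining a point `Z` off the plane of a complete quadrangle
`O, P, Q, R` to its vertices gives a `⋎`-tetrad `o, p, q, r` whose diagonals
are the joins of `Z` to the diagonal points `A, B, C` of the quadrangle. -/
theorem stmt_13 (G : LineGeom) (hG : G.Axioms)
    (O P Q R A B C Z : Set G.L) (ζ : Set G.L)
    (hO : G.IsPoint O) (hP : G.IsPoint P) (hQ : G.IsPoint Q) (hR : G.IsPoint R)
    (hdist : O ≠ P ∧ O ≠ Q ∧ O ≠ R ∧ P ≠ Q ∧ P ≠ R ∧ Q ≠ R)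
    (hζ : G.IsPlane ζ)
    (hOζ : (O ∩ ζ).Nonempty) (hPζ : (P ∩ ζ).Nonempty)
    (hQζ : (Q ∩ ζ).Nonempty) (hRζ : (R ∩ ζ).Nonempty)
    (hnc : ∀ X Y W : Set G.L, ({X, Y, W} : Set (Set G.L)) ⊆ {O, P, Q, R} →
      X ≠ Y → Y ≠ W → X ≠ W → ¬ ∃ l : G.L, l ∈ X ∧ l ∈ Y ∧ l ∈ W)
    (lOP lQR lOQ lRP lOR lPQ : G.L)
    (hOP : O ∩ P = {lOP}) (hQR : Q ∩ R = {lQR})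
    (hOQ : O ∩ Q = {lOQ}) (hRP : R ∩ P = {lRP})
    (hOR : O ∩ R = {lOR}) (hPQ : P ∩ Q = {lPQ})
    (hA : G.IsPoint A) (hA1 : lOP ∈ A) (hA2 : lQR ∈ A)
    (hB : G.IsPoint B) (hB1 : lOQ ∈ B) (hB2 : lRP ∈ B)
    (hC : G.IsPoint C) (hC1 : lOR ∈ C) (hC2 : lPQ ∈ C)
    (hZ : G.IsPoint Z) (hZζ : Z ∩ ζ = ∅)
    (o p q r a b c : G.L)
    (ho : Z ∩ O = {o}) (hp : Z ∩ P = {p}) (hq : Z ∩ Q = {q}) (hr : Z ∩ R = {r})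
    (ha : Z ∩ A = {a}) (hb : Z ∩ B = {b}) (hc : Z ∩ C = {c}) :
    G.YTetrad o p q r ∧
    G.pl o p ∩ G.pl q r = {a} ∧
    G.pl o q ∩ G.pl r p = {b} ∧
    G.pl o r ∩ G.pl p q = {c} := by
  obtain ⟨hOP', hOQ', hOR', hPQ', hPR', hQR'⟩ := hdist
  -- memberships of the joins
  have hoZO : o ∈ Z ∩ O := by rw [ho]; rfl
  have hpZP : p ∈ Z ∩ P := by rw [hp]; rfl
  have hqZQ : q ∈ Z ∩ Q := by rw [hq]; rfl
  have hrZR : r ∈ Z ∩ R := by rw [hr]; rfl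
  have haZA : a ∈ Z ∩ A := by rw [ha]; rfl
  have hbZB : b ∈ Z ∩ B := by rw [hb]; rfl
  have hcZC : c ∈ Z ∩ C := by rw [hc]; rfl
  have hoZ := hoZO.1; have hoO := hoZO.2
  have hpZ := hpZP.1; have hpP := hpZP.2
  have hqZ := hqZQ.1; have hqQ := hqZQ.2
  have hrZ := hrZR.1; have hrR := hrZR.2
  have haZ := haZA.1; have haA := haZA.2
  have hbZ := hbZB.1; have hbB := hbZB.2
  have hcZ := hcZC.1; have hcC := hcZC.2
  -- memberships of the six side lines
  have hlOP : lOP ∈ O ∩ P := by rw [hOP]; rfl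
  have hlQR : lQR ∈ Q ∩ R := by rw [hQR]; rfl
  have hlOQ : lOQ ∈ O ∩ Q := by rw [hOQ]; rfl
  have hlRP : lRP ∈ R ∩ P := by rw [hRP]; rfl
  have hlOR : lOR ∈ O ∩ R := by rw [hOR]; rfl
  have hlPQ : lPQ ∈ P ∩ Q := by rw [hPQ]; rfl
  -- non-collinearity in the needed ordered forms
  have hsub : ∀ X Y W : Set G.L, X ∈ ({O,P,Q,R} : Set (Set G.L)) →
      Y ∈ ({O,P,Q,R} : Set (Set G.L)) → W ∈ ({O,P,Q,R} : Set (Set G.L)) →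
      ({X, Y, W} : Set (Set G.L)) ⊆ {O, P, Q, R} := by
    intro X Y W h1 h2 h3 x hx
    simp only [Set.mem_insert_iff, Set.mem_singleton_iff] at hx
    rcases hx with rfl | rfl | rfl <;> assumption
  have hmO : O ∈ ({O,P,Q,R} : Set (Set G.L)) := by simp
  have hmP : P ∈ ({O,P,Q,R} : Set (Set G.L)) := by simp
  have hmQ : Q ∈ ({O,P,Q,R} : Set (Set G.L)) := by simp
  have hmR : R ∈ ({O,P,Q,R} : Set (Set G.L)) := by simp
  have hncPQR := hnc P Q R (hsub P Q R hmP hmQ hmR) hPQ' hQR' hPR'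
  have hncOQR := hnc O Q R (hsub O Q R hmO hmQ hmR) hOQ' hQR' hOR'
  have hncORP := hnc O R P (hsub O R P hmO hmR hmP) hOR' (Ne.symm hPR') hOP'
  have hncOPQ := hnc O P Q (hsub O P Q hmO hmP hmQ) hOP' hPQ' hOQ'
  have hncOPR := hnc O P R (hsub O P R hmO hmP hmR) hOP' hPR' hOR'
  -- the tetrad
  have T1 : G.YTriad p q r := ytriad_of hG hZ hP hQ hR hζ hPQ' hPR' hQR'
    hPζ hQζ hRζ hZζ hncPQR hpZ hpP hqZ hqQ hrZ hrR
  have T2 : G.YTriad o q r := ytriad_of hG hZ hO hQ hR hζ hOQ' hOR' hQR'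
    hOζ hQζ hRζ hZζ hncOQR hoZ hoO hqZ hqQ hrZ hrR
  have T3 : G.YTriad o r p := ytriad_of hG hZ hO hR hP hζ hOR' hOP'
    (Ne.symm hPR') hOζ hRζ hPζ hZζ hncORP hoZ hoO hrZ hrR hpZ hpP
  have T4 : G.YTriad o p q := ytriad_of hG hZ hO hP hQ hζ hOP' hOQ' hPQ'
    hOζ hPζ hQζ hZζ hncOPQ hoZ hoO hpZ hpP hqZ hqQ
  refine ⟨⟨T1, T2, T3, T4⟩, ?_, ?_, ?_⟩
  -- diagonal a
  · have hAO : A ≠ O := fun h => hncOQR ⟨lQR, h ▸ hA2, hlQR.1, hlQR.2⟩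
    have hAQ : A ≠ Q := fun h => hncOPQ ⟨lOP, hlOP.1, hlOP.2, h ▸ hA1⟩
    have ha_op : a ∈ G.pl o p := diag_mem hG hZ hO hP hA hζ hOP' hAO
      hOζ hPζ hZζ hoZ hoO hpZ hpP hlOP.1 hlOP.2 hA1 haZ haA
    have ha_qr : a ∈ G.pl q r := diag_mem hG hZ hQ hR hA hζ hQR' hAQ
      hQζ hRζ hZζ hqZ hqQ hrZ hrR hlQR.1 hlQR.2 hA2 haZ haA
    have hop := T4.1
    have hdop := T4.2.2.2.1
    have hqr := T1.2.1
    have hdqr := T1.2.2.2.2.1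
    have hne : G.pl o p ≠ G.pl q r := by
      intro h
      have hqY : q ∈ G.SigY o p := T4.2.2.2.2.2.2.2.2
      exact sigY_not_pl hG hop hdop hqY (h ▸ mem_pl_left hG hqr hdqr)
    ext m
    simp only [Set.mem_inter_iff, Set.mem_singleton_iff]
    constructor
    · rintro ⟨h1, h2⟩
      exact uniq_plane hG (isPlane_pl hop hdop) (isPlane_pl hqr hdqr) hne
        h1 h2 ha_op ha_qr
    · rintro rfl
      exact ⟨ha_op, ha_qr⟩
  -- diagonal b
  · have hBO : B ≠ O := fun h => hncORP ⟨lRP, h ▸ hB2, hlRP.1, hlRP.2⟩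
    have hBR : B ≠ R := fun h => hncOQR ⟨lOQ, hlOQ.1, hlOQ.2, h ▸ hB1⟩
    have hb_oq : b ∈ G.pl o q := diag_mem hG hZ hO hQ hB hζ hOQ' hBO
      hOζ hQζ hZζ hoZ hoO hqZ hqQ hlOQ.1 hlOQ.2 hB1 hbZ hbB
    have hb_rp : b ∈ G.pl r p := diag_mem hG hZ hR hP hB hζ (Ne.symm hPR') hBR
      hRζ hPζ hZζ hrZ hrR hpZ hpP hlRP.1 hlRP.2 hB2 hbZ hbB
    have hoq := T2.1
    have hdoq := T2.2.2.2.1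
    have hrp := T3.2.1
    have hdrp := T3.2.2.2.2.1
    have hne : G.pl o q ≠ G.pl r p := by
      intro h
      have hrY : r ∈ G.SigY o q := T2.2.2.2.2.2.2.2.2
      exact sigY_not_pl hG hoq hdoq hrY (h ▸ mem_pl_left hG hrp hdrp)
    ext m
    simp only [Set.mem_inter_iff, Set.mem_singleton_iff]
    constructor
    · rintro ⟨h1, h2⟩
      exact uniq_plane hG (isPlane_pl hoq hdoq) (isPlane_pl hrp hdrp) hne
        h1 h2 hb_oq hb_rp
    · rintro rfl
      exact ⟨hb_oq, hb_rp⟩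
  -- diagonal c
  · have hCO : C ≠ O := fun h => hncOPQ ⟨lPQ, h ▸ hC2, hlPQ.1, hlPQ.2⟩
    have hCP : C ≠ P := fun h => hncOPR ⟨lOR, hlOR.1, h ▸ hC1, hlOR.2⟩
    have hc_or : c ∈ G.pl o r := diag_mem hG hZ hO hR hC hζ hOR' hCO
      hOζ hRζ hZζ hoZ hoO hrZ hrR hlOR.1 hlOR.2 hC1 hcZ hcC
    have hc_pq : c ∈ G.pl p q := diag_mem hG hZ hP hQ hC hζ hPQ' hCP
      hPζ hQζ hZζ hpZ hpP hqZ hqQ hlPQ.1 hlPQ.2 hC2 hcZ hcC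
    have hor := T3.1
    have hdor := T3.2.2.2.1
    have hpq := T1.1
    have hdpq := T1.2.2.2.1
    have hne : G.pl o r ≠ G.pl p q := by
      intro h
      have hpY : p ∈ G.SigY o r := T3.2.2.2.2.2.2.2.2
      exact sigY_not_pl hG hor hdor hpY (h ▸ mem_pl_left hG hpq hdpq)
    ext m
    simp only [Set.mem_inter_iff, Set.mem_singleton_iff]
    constructor
    · rintro ⟨h1, h2⟩
      exact uniq_plane hG (isPlane_pl hor hdor) (isPlane_pl hpq hdpq) hne
        h1 h2 hc_or hc_pq
    · rintro rfl
      exact ⟨hc_or, hc_pq⟩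
end

section
/- If four pairwise-incident lines o, p, q, r include no triad, then all four lie in a common flat pencil: o, p, q, r ∈ (p ⋎ q) ∩ (p ⊓ q), i.e., they all pass through the point p ⋎ q and lie in the plane p ⊓ q. -/
open LineGeom

namespace LineGeom

variable (G : LineGeom)

lemma mem_perp_pair {x a b : G.L} : x ∈ G.perp {a, b} ↔ G.dag x a ∧ G.dag x b := by
  simp [perp]

lemma mem_perp_triple {x a b c : G.L} :
    x ∈ G.perp {a, b, c} ↔ G.dag x a ∧ G.dag x b ∧ G.dag x c := by
  simp [perp]

lemma perp_pair_comm (a b : G.L) : G.perp {a, b} = G.perp {b, a} := by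
  ext x; simp [G.mem_perp_pair, and_comm]

lemma Sig_comm (a b : G.L) : G.Sig a b = G.Sig b a := by
  unfold Sig; rw [perp_pair_comm]

lemma perp_antitone {S T : Set G.L} (h : S ⊆ T) : G.perp T ⊆ G.perp S :=
  fun x hx s hs => hx s (h hs)

lemma self_mem_perp_perp {a b : G.L} : b ∈ G.perp (G.perp {a, b}) := by
  intro s hs
  exact G.dag_symm ((G.mem_perp_pair.1 hs).2)

/-- If `a ∈ [b c]†` (i.e. `a ∉ Σ(b,c)` while incident to `b,c`), then
`c ∉ Σ(a,b)`. -/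
lemma notSig_rotate {a b c : G.L} (hG : G.Axioms) (hab : a ≠ b) (hbc : b ≠ c)
    (dab : G.dag a b) (dbc : G.dag b c) (dac : G.dag a c)
    (h : a ∉ G.Sig b c) : c ∉ G.Sig a b := by
  intro hc
  have ha2 : a ∈ G.perp {b, c} := G.mem_perp_pair.2 ⟨dab, dac⟩
  have happ : a ∈ G.perp (G.perp {b, c}) := by
    by_contra hcon; exact h ⟨ha2, hcon⟩
  have hsub : G.perp {b, c} ⊆ G.perp {a, b, c} := by
    intro t ht
    rcases G.mem_perp_pair.1 ht with ⟨h1, h2⟩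
    exact G.mem_perp_triple.2 ⟨G.dag_symm (happ t ht), h1, h2⟩
  obtain ⟨x, hx, y, hy, hxy⟩ := hG.ax21 b c hbc dbc
  exact hxy (hG.ax22 a b hab dab c hc x (hsub hx) y (hsub hy))

/-- If three pairwise-incident distinct lines do not form a triad, then
`c ∉ Σ(a,b)`. -/
lemma not_sig_of_not_triad {a b c : G.L} (hG : G.Axioms)
    (hab : a ≠ b) (hbc : b ≠ c) (hac : a ≠ c)
    (dab : G.dag a b) (dbc : G.dag b c) (dac : G.dag a c)
    (h : ¬ G.Triad a b c) : c ∉ G.Sig a b := by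
  intro hc
  have ha : a ∈ G.Sig b c := by
    by_contra ha
    exact G.notSig_rotate hG hab hbc dab dbc dac ha hc
  have hb : b ∈ G.Sig c a := by
    by_contra hb
    exact G.notSig_rotate hG hbc (Ne.symm hac) dbc (G.dag_symm dac) (G.dag_symm dab) hb ha
  exact h ⟨hab, hbc, hac, dab, dbc, dac, ha, hb, hc⟩

end LineGeom

/-- Four pairwise-incident distinct lines including no triad lie
in the flat pencil of lines through the point `p ⋎ q` in the plane `p ⊓ q`. -/
theorem stmt_14 (G : LineGeom) (hG : G.Axioms) (o p q r : G.L)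
    (hd : List.Pairwise (· ≠ ·) [o, p, q, r])
    (hop : G.dag o p) (hoq : G.dag o q) (hor : G.dag o r)
    (hpq : G.dag p q) (hpr : G.dag p r) (hqr : G.dag q r)
    (hnt : ¬ (G.Triad p q r ∨ G.Triad o q r ∨ G.Triad o r p ∨ G.Triad o p q)) :
    o ∈ G.pt p q ∩ G.pl p q ∧ p ∈ G.pt p q ∩ G.pl p q ∧
    q ∈ G.pt p q ∩ G.pl p q ∧ r ∈ G.pt p q ∩ G.pl p q := by
  simp only [List.pairwise_cons, List.mem_cons, List.mem_singleton, List.not_mem_nil,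
    forall_eq_or_imp, forall_eq, or_false] at hd
  obtain ⟨⟨hop', hoq', hor'⟩, ⟨hpq', hpr'⟩, hqr', -⟩ := hd
  push_neg at hnt
  obtain ⟨hnt1, hnt2, hnt3, hnt4⟩ := hnt
  -- `r ∉ Σ(p,q)` and `o ∉ Σ(p,q)`.
  have hr : r ∉ G.Sig p q :=
    G.not_sig_of_not_triad hG hpq' hqr' hpr' hpq hqr hpr hnt1
  have ho : o ∉ G.Sig p q := by
    have hq : q ∉ G.Sig o p :=
      G.not_sig_of_not_triad hG hop' hpq' hoq' hop hpq hoq hnt4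
    rw [G.Sig_comm] at hq
    have := G.notSig_rotate hG (Ne.symm hpq') (Ne.symm hop') (G.dag_symm hpq)
      (G.dag_symm hop) (G.dag_symm hoq) hq
    rwa [G.Sig_comm] at this
  have hrpp : r ∈ G.perp (G.perp {p, q}) := by
    by_contra hc
    exact hr ⟨G.mem_perp_pair.2 ⟨G.dag_symm hpr, G.dag_symm hqr⟩, hc⟩
  have hopp : o ∈ G.perp (G.perp {p, q}) := by
    by_contra hc
    exact ho ⟨G.mem_perp_pair.2 ⟨hop, hoq⟩, hc⟩
  obtain ⟨cY, hcY⟩ := hG.sigY_nonempty p q hpq' hpq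
  obtain ⟨cM, hcM⟩ := hG.sigM_nonempty p q hpq' hpq
  have hcY2 : cY ∈ G.perp {p, q} := by
    have : cY ∈ G.Sig p q := by
      rw [← hG.sig_union p q hpq' hpq]; exact Or.inl hcY
    exact this.1
  have hcM2 : cM ∈ G.perp {p, q} := by
    have : cM ∈ G.Sig p q := by
      rw [← hG.sig_union p q hpq' hpq]; exact Or.inr hcM
    exact this.1
  have hpt : G.pt p q = G.perp {p, q, cY} := hG.pt_spec p q hpq' hpq cY hcY
  have hpl : G.pl p q = G.perp {p, q, cM} := hG.pl_spec p q hpq' hpq cM hcM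
  have hmem : ∀ x, G.dag x p → G.dag x q → x ∈ G.perp (G.perp {p, q}) →
      x ∈ G.pt p q ∩ G.pl p q := by
    intro x h1 h2 h3
    constructor
    · rw [hpt]
      exact G.mem_perp_triple.2 ⟨h1, h2, h3 cY hcY2⟩
    · rw [hpl]
      exact G.mem_perp_triple.2 ⟨h1, h2, h3 cM hcM2⟩
  have hppp : p ∈ G.perp (G.perp {p, q}) := by
    rw [G.perp_pair_comm]; exact G.self_mem_perp_perp
  refine ⟨hmem o hop hoq hopp, hmem p (G.dag_refl p) hpq hppp,
    hmem q (G.dag_symm hpq) (G.dag_refl q) G.self_mem_perp_perp,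
    hmem r (G.dag_symm hpr) (G.dag_symm hqr) hrpp⟩
end

section
/- The lines of a ⊓-triad are coplanar but not copunctal, and the lines of a ⋎-triad are copunctal but not coplanar. -/
open LineGeom


lemma mem_perp3 (G : LineGeom) (x a b c : G.L) :
    x ∈ G.perp {a, b, c} ↔ G.dag x a ∧ G.dag x b ∧ G.dag x c := by
  simp [LineGeom.perp]

/-- The lines of a `⊓`-triad are coplanar but not copunctal;
the lines of a `⋎`-triad are copunctal but not coplanar. -/
theorem stmt_16 (G : LineGeom) (hG : G.Axioms) (a b c : G.L) :
    (G.MTriad a b c →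
      (∃ x y : G.L, x ≠ y ∧ G.dag x y ∧
        a ∈ G.pl x y ∧ b ∈ G.pl x y ∧ c ∈ G.pl x y) ∧
      ¬ ∃ x y : G.L, x ≠ y ∧ G.dag x y ∧
        a ∈ G.pt x y ∧ b ∈ G.pt x y ∧ c ∈ G.pt x y) ∧
    (G.YTriad a b c →
      (∃ x y : G.L, x ≠ y ∧ G.dag x y ∧
        a ∈ G.pt x y ∧ b ∈ G.pt x y ∧ c ∈ G.pt x y) ∧
      ¬ ∃ x y : G.L, x ≠ y ∧ G.dag x y ∧
        a ∈ G.pl x y ∧ b ∈ G.pl x y ∧ c ∈ G.pl x y) := by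
  constructor
  · rintro ⟨hab, hbc, hac, dab, dbc, dac, ha, hb, hc⟩
    have hpl : G.pl a b = G.perp {a, b, c} := hG.pl_spec a b hab dab c hc
    have hcSig : c ∈ G.Sig a b := by
      rw [← hG.sig_union a b hab dab]; exact Or.inr hc
    refine ⟨⟨a, b, hab, dab, ?_, ?_, ?_⟩, ?_⟩
    · rw [hpl]; exact (mem_perp3 G a a b c).2 ⟨G.dag_refl a, dab, dac⟩
    · rw [hpl]; exact (mem_perp3 G b a b c).2 ⟨G.dag_symm dab, G.dag_refl b, dbc⟩
    · rw [hpl]; exact (mem_perp3 G c a b c).2 ⟨G.dag_symm dac, G.dag_symm dbc, G.dag_refl c⟩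
    rintro ⟨x, y, hxy, dxy, hax, hbx, hcx⟩
    obtain ⟨z, hz⟩ := hG.sigY_nonempty x y hxy dxy
    have hpt : G.pt x y = G.perp {x, y, z} := hG.pt_spec x y hxy dxy z hz
    have hzSig : z ∈ G.Sig x y := by
      rw [← hG.sig_union x y hxy dxy]; exact Or.inl hz
    have hsub : G.pt x y ⊆ G.perp {a, b, c} := by
      intro l hl
      rw [hpt] at hl hax hbx hcx
      exact (mem_perp3 G l a b c).2
        ⟨hG.ax22 x y hxy dxy z hzSig l hl a hax,
         hG.ax22 x y hxy dxy z hzSig l hl b hbx,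
         hG.ax22 x y hxy dxy z hzSig l hl c hcx⟩
    obtain ⟨p, q, hpq, dpq, r, hr, hdisj⟩ := hG.ax3 a b hab dab c hcSig
    rw [← hG.sig_union p q hpq dpq] at hr
    rcases hr with hrY | hrM
    · obtain ⟨l, hl1, hl2⟩ := (hG.ax4 x y p q hxy dxy hpq dpq).1
      have hmem : l ∈ G.perp {a, b, c} ∩ G.perp {p, q, r} :=
        ⟨hsub hl1, by rw [← hG.pt_spec p q hpq dpq r hrY]; exact hl2⟩
      rw [hdisj] at hmem; exact hmem
    · obtain ⟨l, hl1, hl2⟩ := (hG.ax4 a b p q hab dab hpq dpq).2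
      have hmem : l ∈ G.perp {a, b, c} ∩ G.perp {p, q, r} :=
        ⟨by rw [← hpl]; exact hl1, by rw [← hG.pl_spec p q hpq dpq r hrM]; exact hl2⟩
      rw [hdisj] at hmem; exact hmem
  · rintro ⟨hab, hbc, hac, dab, dbc, dac, ha, hb, hc⟩
    have hpt : G.pt a b = G.perp {a, b, c} := hG.pt_spec a b hab dab c hc
    have hcSig : c ∈ G.Sig a b := by
      rw [← hG.sig_union a b hab dab]; exact Or.inl hc
    refine ⟨⟨a, b, hab, dab, ?_, ?_, ?_⟩, ?_⟩
    · rw [hpt]; exact (mem_perp3 G a a b c).2 ⟨G.dag_refl a, dab, dac⟩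
    · rw [hpt]; exact (mem_perp3 G b a b c).2 ⟨G.dag_symm dab, G.dag_refl b, dbc⟩
    · rw [hpt]; exact (mem_perp3 G c a b c).2 ⟨G.dag_symm dac, G.dag_symm dbc, G.dag_refl c⟩
    rintro ⟨x, y, hxy, dxy, hax, hbx, hcx⟩
    obtain ⟨z, hz⟩ := hG.sigM_nonempty x y hxy dxy
    have hplx : G.pl x y = G.perp {x, y, z} := hG.pl_spec x y hxy dxy z hz
    have hzSig : z ∈ G.Sig x y := by
      rw [← hG.sig_union x y hxy dxy]; exact Or.inr hz
    have hsub : G.pl x y ⊆ G.perp {a, b, c} := by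
      intro l hl
      rw [hplx] at hl hax hbx hcx
      exact (mem_perp3 G l a b c).2
        ⟨hG.ax22 x y hxy dxy z hzSig l hl a hax,
         hG.ax22 x y hxy dxy z hzSig l hl b hbx,
         hG.ax22 x y hxy dxy z hzSig l hl c hcx⟩
    obtain ⟨p, q, hpq, dpq, r, hr, hdisj⟩ := hG.ax3 a b hab dab c hcSig
    rw [← hG.sig_union p q hpq dpq] at hr
    rcases hr with hrY | hrM
    · obtain ⟨l, hl1, hl2⟩ := (hG.ax4 a b p q hab dab hpq dpq).1
      have hmem : l ∈ G.perp {a, b, c} ∩ G.perp {p, q, r} :=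
        ⟨by rw [← hpt]; exact hl1, by rw [← hG.pt_spec p q hpq dpq r hrY]; exact hl2⟩
      rw [hdisj] at hmem; exact hmem
    · obtain ⟨l, hl1, hl2⟩ := (hG.ax4 x y p q hxy dxy hpq dpq).2
      have hmem : l ∈ G.perp {a, b, c} ∩ G.perp {p, q, r} :=
        ⟨hsub hl1, by rw [← hG.pl_spec p q hpq dpq r hrM]; exact hl2⟩
      rw [hdisj] at hmem; exact hmem
end
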